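/- Let p : X → Y be a continuous map of topological spaces with the path lifting property (for every x ∈ X and every path γ : [0,1] → Y with γ(0) = p(x), there is a path γ' : [0,1] → X with γ'(0) = x and p ∘ γ' = γ), and let q : Z → Y be any continuous map. Then the canonical map π₀(X ×_Y Z) → π₀(X) ×_{π₀(Y)} π₀(Z) from the set of path-components of the fibered product to the fibered product of path-component sets is surjective. -/

import Mathlib

theorem exists_joined_of_path_lifting {X Y : Type*} [TopologicalSpace X] [TopologicalSpace Y]
    {p : X → Y}
    (hlift : ∀ (x : X) (γ : C(unitInterval, Y)), γ 0 = p x →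
      ∃ γ' : C(unitInterval, X), γ' 0 = x ∧ ∀ t, p (γ' t) = γ t)
    {x : X} {y : Y} (h : Joined (p x) y) : ∃ x', Joined x x' ∧ p x' = y := by
  obtain ⟨γ⟩ := h
  obtain ⟨γ', hγ'₀, hγ'⟩ := hlift x γ.toContinuousMap γ.source
  exact ⟨γ' 1, ⟨⟨γ', hγ'₀, rfl⟩⟩, (hγ' 1).trans γ.target⟩

theorem stmt8_general {X Y Z : Type*} [TopologicalSpace X] [TopologicalSpace Y] [TopologicalSpace Z]
    (p : X → Y) (q : Z → Y)
    (hlift : ∀ (x : X) (γ : C(unitInterval, Y)), γ 0 = p x →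
      ∃ γ' : C(unitInterval, X), γ' 0 = x ∧ ∀ t, p (γ' t) = γ t) :
    ∀ (x : X) (z : Z), Joined (p x) (q z) →
      ∃ w : {w : X × Z // p w.1 = q w.2}, Joined x (w : X × Z).1 ∧ Joined z (w : X × Z).2 := by
  intro x z h
  obtain ⟨x', hxx', hx'⟩ := exists_joined_of_path_lifting hlift h
  exact ⟨⟨(x', z), hx'⟩, hxx', Joined.refl z⟩

/-- For p : X → Y with the path lifting property and any q : Z → Y,
π₀ of the fibered product surjects onto the fibered product of π₀'s. -/
theorem stmt8 {X Y Z : Type*} [TopologicalSpace X] [TopologicalSpace Y] [TopologicalSpace Z]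
    (p : X → Y) (q : Z → Y) (hp : Continuous p) (hq : Continuous q)
    (hlift : ∀ (x : X) (γ : C(unitInterval, Y)), γ 0 = p x →
      ∃ γ' : C(unitInterval, X), γ' 0 = x ∧ ∀ t, p (γ' t) = γ t) :
    ∀ (x : X) (z : Z), Joined (p x) (q z) →
      ∃ w : {w : X × Z // p w.1 = q w.2}, Joined x (w : X × Z).1 ∧ Joined z (w : X × Z).2 :=
  stmt8_general p q hlift
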